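/- Let ‖·‖ be a norm on ℝ² with unit sphere S. If ‖·‖ is not a URTC-norm, then there exist c, d ∈ S with ‖c − d‖ > 1 such that the segment [c, d] is contained in S. -/

import Mathlib

/-- `N` is a norm on `ℝ²`. -/
structure IsNorm (N : ℝ × ℝ → ℝ) : Prop where
  add_le : ∀ x y : ℝ × ℝ, N (x + y) ≤ N x + N y
  smul_eq : ∀ (c : ℝ) (x : ℝ × ℝ), N (c • x) = |c| * N x
  eq_zero_of : ∀ x : ℝ × ℝ, N x = 0 → x = 0

/-- `N` is a URTC-norm: for every `a b` at `N`-distance `1`, there are exactly two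
points `x` with `N (a - x) = 1` and `N (b - x) = 1`. -/
def IsURTC (N : ℝ × ℝ → ℝ) : Prop :=
  ∀ a b : ℝ × ℝ, N (a - b) = 1 →
    {x : ℝ × ℝ | N (a - x) = 1 ∧ N (b - x) = 1}.encard = 2

/-!
Put `v = a - b` and call `x` an apex if `N x = N (x - v) = 1`; the URTC set of `a, b` is
`a - {apexes}`. The map `x ↦ v - x` permutes the apexes and swaps the two sides of the line
`ℝ v`, on which no apex lies, and an intermediate value argument along the upper half of the unit
sphere gives an apex on the positive side. So if there are not exactly two apexes, two distinct
ones `p, q` lie on the same side, say `q` farther from `ℝ v`. If `q - p ∥ v`, the sphere points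
`p - v, p, q, q - v` span a chord of length `> 1` of the line `p + ℝ v`. Otherwise, for the right
`l ∈ (0, 1)`, the ball points `l v + (1 - l) q` and `-l v + (1 - l) (q - v)` lie on that line,
`1 + l` apart. In both cases the chord has a point of the sphere strictly inside it and its ends
in the ball, and a convex function that is `≤ 1` at both ends and `= 1` inside is `≡ 1`.
-/

open Set

theorem ConvexOn.eq_of_mem_Icc_of_le_interior {f : ℝ → ℝ} {A E B : ℝ}
    (hf : ConvexOn ℝ (Icc A B) f) (hAE : A < E) (hEB : E < B) (hA : f A ≤ f E)
    (hB : f B ≤ f E) {t : ℝ} (ht : t ∈ Icc A B) : f t = f E := by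
  have hAmem : A ∈ Icc A B := left_mem_Icc.2 (hAE.trans hEB).le
  have hBmem : B ∈ Icc A B := right_mem_Icc.2 (hAE.trans hEB).le
  refine le_antisymm ?_ ?_
  · rw [← segment_eq_Icc (hAE.trans hEB).le] at ht
    exact (hf.le_on_segment hAmem hBmem ht).trans (max_le hA hB)
  · rcases le_total t E with htE | hEt
    · exact hf.le_left_of_right_le'' ht hBmem htE hEB hB
    · exact hf.le_right_of_left_le'' hAmem ht hAE hEt hA

def wedge (v : ℝ × ℝ) : ℝ × ℝ →ₗ[ℝ] ℝ :=
  v.1 • LinearMap.snd ℝ ℝ ℝ - v.2 • LinearMap.fst ℝ ℝ ℝ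

theorem wedge_apply (v w : ℝ × ℝ) : wedge v w = v.1 * w.2 - v.2 * w.1 := rfl

theorem wedge_self (v : ℝ × ℝ) : wedge v v = 0 := by
  rw [wedge_apply]; ring

theorem sq_add_sq_pos_of_ne_zero {v : ℝ × ℝ} (hv : v ≠ 0) : 0 < v.1 ^ 2 + v.2 ^ 2 := by
  by_contra! h
  exact hv (Prod.ext (by simp; nlinarith) (by simp; nlinarith))

theorem exists_eq_add_smul_of_wedge_eq {v x y : ℝ × ℝ} (hv : v ≠ 0)
    (h : wedge v x = wedge v y) : ∃ t : ℝ, y = x + t • v := by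
  have hc := (sq_add_sq_pos_of_ne_zero hv).ne'
  rw [wedge_apply, wedge_apply] at h
  refine ⟨(v.1 * (y.1 - x.1) + v.2 * (y.2 - x.2)) / (v.1 ^ 2 + v.2 ^ 2), Prod.ext ?_ ?_⟩
  · simp only [Prod.fst_add, Prod.smul_fst, smul_eq_mul]
    field_simp
    linear_combination v.2 * h
  · simp only [Prod.snd_add, Prod.smul_snd, smul_eq_mul]
    field_simp
    linear_combination -v.1 * h

theorem exists_path_wedge_pos {v : ℝ × ℝ} (hv : v ≠ 0) :
    ∃ z : ℝ → ℝ × ℝ, Continuous z ∧ z 0 = v ∧ z 1 = -v ∧ (∀ t, z t ≠ 0) ∧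
      ∀ t ∈ Ioo (0 : ℝ) 1, 0 < wedge v (z t) := by
  have hc := sq_add_sq_pos_of_ne_zero hv
  set z : ℝ → ℝ × ℝ := fun t => (1 - 2 * t) • v + (t * (1 - t)) • ((-v.2, v.1) : ℝ × ℝ)
  have hwz (t : ℝ) : wedge v (z t) = t * (1 - t) * (v.1 ^ 2 + v.2 ^ 2) := by
    simp only [z, map_add, map_smul, wedge_self, wedge_apply, smul_eq_mul]; ring
  refine ⟨z, by fun_prop, by simp only [z]; module, by simp only [z]; module, fun t h => ?_,
    fun t ⟨ht0, ht1⟩ => ?_⟩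
  · have h1 : (1 - 2 * t) * (v.1 ^ 2 + v.2 ^ 2) = 0 := by
      have := congrArg (fun w : ℝ × ℝ => v.1 * w.1 + v.2 * w.2) h
      simp only [z, Prod.fst_add, Prod.snd_add, Prod.smul_fst, Prod.smul_snd, smul_eq_mul,
        Prod.fst_zero, Prod.snd_zero] at this
      linear_combination this
    have h2 : t * (1 - t) * (v.1 ^ 2 + v.2 ^ 2) = 0 := by
      rw [← hwz, h, map_zero]
    have h1' := (mul_eq_zero.1 h1).resolve_right hc.ne'
    have h2' := (mul_eq_zero.1 h2).resolve_right hc.ne'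
    nlinarith
  · rw [hwz]
    have : 0 < 1 - t := by linarith
    positivity

def SphereHasLongSegment (N : ℝ × ℝ → ℝ) : Prop :=
  ∃ c d : ℝ × ℝ, N c = 1 ∧ N d = 1 ∧ 1 < N (c - d) ∧
    segment ℝ c d ⊆ {x : ℝ × ℝ | N x = 1}

def unitApexes (N : ℝ × ℝ → ℝ) (v : ℝ × ℝ) : Set (ℝ × ℝ) :=
  {x | N x = 1 ∧ N (x - v) = 1}

theorem image_sub_unitApexes (N : ℝ × ℝ → ℝ) (a b : ℝ × ℝ) :
    (a - ·) '' unitApexes N (a - b) = {x | N (a - x) = 1 ∧ N (b - x) = 1} := by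
  ext x
  constructor
  · rintro ⟨y, ⟨hy, hyv⟩, rfl⟩
    refine ⟨by rwa [sub_sub_cancel], ?_⟩
    rwa [show b - (a - y) = y - (a - b) by module]
  · rintro ⟨hax, hbx⟩
    refine ⟨a - x, ⟨hax, ?_⟩, sub_sub_cancel a x⟩
    rwa [sub_sub_sub_cancel_left]

namespace IsNorm

variable {N : ℝ × ℝ → ℝ}

theorem map_zero (hN : IsNorm N) : N 0 = 0 := by
  simpa using hN.smul_eq 0 0

theorem map_neg (hN : IsNorm N) (x : ℝ × ℝ) : N (-x) = N x := by
  simpa using hN.smul_eq (-1) x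

theorem ne_zero_of_map_eq_one (hN : IsNorm N) {v : ℝ × ℝ} (hv : N v = 1) : v ≠ 0 := by
  rintro rfl
  simp [hN.map_zero] at hv

theorem nonneg (hN : IsNorm N) (x : ℝ × ℝ) : 0 ≤ N x := by
  have h := hN.add_le x (-x)
  rw [add_neg_cancel, hN.map_zero, hN.map_neg] at h
  linarith

theorem pos_of_ne_zero (hN : IsNorm N) {x : ℝ × ℝ} (hx : x ≠ 0) : 0 < N x :=
  (hN.nonneg x).lt_of_ne fun h => hx (hN.eq_zero_of x h.symm)

theorem convexOn (hN : IsNorm N) : ConvexOn ℝ univ N := by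
  refine ⟨convex_univ, fun x _ y _ a b ha hb _ => ?_⟩
  calc N (a • x + b • y) ≤ N (a • x) + N (b • y) := hN.add_le _ _
    _ = a • N x + b • N y := by
      rw [hN.smul_eq, hN.smul_eq, abs_of_nonneg ha, abs_of_nonneg hb, smul_eq_mul, smul_eq_mul]

theorem continuous (hN : IsNorm N) : Continuous N :=
  hN.convexOn.locallyLipschitz.continuous

theorem convexOn_line (hN : IsNorm N) (p v : ℝ × ℝ) :
    ConvexOn ℝ univ fun t : ℝ => N (p + t • v) := by
  refine ⟨convex_univ, fun s _ t _ a b ha hb hab => ?_⟩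
  have hcomb : p + (a • s + b • t) • v = a • (p + s • v) + b • (p + t • v) := by
    obtain rfl : a = 1 - b := by linarith
    module
  dsimp only
  rw [hcomb]
  exact hN.convexOn.2 (mem_univ _) (mem_univ _) ha hb hab

theorem segment_subset_sphere (hN : IsNorm N) (p v : ℝ × ℝ) {A E B : ℝ} (hAE : A < E)
    (hEB : E < B) (hA : N (p + A • v) ≤ 1) (hE : N (p + E • v) = 1)
    (hB : N (p + B • v) ≤ 1) :
    segment ℝ (p + A • v) (p + B • v) ⊆ {x | N x = 1} := by
  rintro _ ⟨a, b, ha, hb, hab, rfl⟩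
  have hline : a • (p + A • v) + b • (p + B • v) = p + (a * A + b * B) • v := by
    obtain rfl : a = 1 - b := by linarith
    module
  have hmem : a * A + b * B ∈ Icc A B := by
    rw [← segment_eq_Icc (hAE.trans hEB).le]
    exact ⟨a, b, ha, hb, hab, rfl⟩
  have hconv := (hN.convexOn_line p v).subset (subset_univ _) (convex_Icc A B)
  show N _ = 1
  rw [hline, ← hE]
  exact hconv.eq_of_mem_Icc_of_le_interior hAE hEB (hE ▸ hA) (hE ▸ hB) hmem

theorem sphereHasLongSegment_of_line (hN : IsNorm N) {p v : ℝ × ℝ} (hv : N v = 1) {A E B : ℝ}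
    (hAE : A < E) (hEB : E < B) (hAB : 1 < B - A) (hA : N (p + A • v) ≤ 1)
    (hE : N (p + E • v) = 1) (hB : N (p + B • v) ≤ 1) : SphereHasLongSegment N := by
  have hseg := hN.segment_subset_sphere p v hAE hEB hA hE hB
  refine ⟨_, _, hseg (left_mem_segment ℝ _ _), hseg (right_mem_segment ℝ _ _), ?_, hseg⟩
  have hdiff : p + A • v - (p + B • v) = (A - B) • v := by module
  rw [hdiff, hN.smul_eq, hv, abs_sub_comm, abs_of_pos (by linarith)]
  linarith

theorem sphereHasLongSegment_of_chord (hN : IsNorm N) {p v : ℝ × ℝ} (hv : N v = 1)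
    (hp : N p = 1) (hpv : N (p - v) = 1) {s t : ℝ} (hs : N (p + s • v) ≤ 1)
    (ht : N (p + t • v) ≤ 1) (hst : 1 < t - s) : SphereHasLongSegment N := by
  have hp' : N (p + (0 : ℝ) • v) = 1 := by rwa [zero_smul, add_zero]
  have hpv' : N (p + (-1 : ℝ) • v) = 1 := by rwa [neg_one_smul, ← sub_eq_add_neg]
  rcases lt_or_ge 0 t with ht0 | ht0
  · exact hN.sphereHasLongSegment_of_line hv (by norm_num) ht0 (by linarith) hpv'.le hp' ht
  · exact hN.sphereHasLongSegment_of_line hv (by linarith) (by norm_num) (by linarith) hs hpv'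
      hp'.le

theorem sub_mem_unitApexes (hN : IsNorm N) {v x : ℝ × ℝ} (hx : x ∈ unitApexes N v) :
    v - x ∈ unitApexes N v := by
  obtain ⟨hx, hxv⟩ := hx
  refine ⟨by rwa [← neg_sub, hN.map_neg], ?_⟩
  rwa [sub_sub_cancel_left, hN.map_neg]

theorem wedge_ne_zero_of_mem_unitApexes (hN : IsNorm N) {v x : ℝ × ℝ} (hv : N v = 1)
    (hx : x ∈ unitApexes N v) : wedge v x ≠ 0 := by
  intro h0
  obtain ⟨t, rfl⟩ := exists_eq_add_smul_of_wedge_eq (x := 0) (y := x)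
    (hN.ne_zero_of_map_eq_one hv) (by rw [_root_.map_zero, h0])
  obtain ⟨hx, hxv⟩ := hx
  rw [zero_add, hN.smul_eq, hv, mul_one] at hx
  rw [zero_add, show t • v - v = (t - 1) • v by module, hN.smul_eq, hv, mul_one] at hxv
  cases abs_cases t <;> cases abs_cases (t - 1) <;> linarith

theorem exists_mem_unitApexes_wedge_pos (hN : IsNorm N) {v : ℝ × ℝ} (hv : N v = 1) :
    ∃ x ∈ unitApexes N v, 0 < wedge v x := by
  obtain ⟨z, hzc, hz0, hz1, hz, hwz⟩ := exists_path_wedge_pos (hN.ne_zero_of_map_eq_one hv)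
  have hNz (t : ℝ) : 0 < N (z t) := hN.pos_of_ne_zero (hz t)
  set g : ℝ → ℝ := fun t => N ((N (z t))⁻¹ • z t - v)
  have hg : Continuous g := by
    have hNc := hN.continuous
    exact hNc.comp ((((hNc.comp hzc).inv₀ fun t => (hNz t).ne').smul hzc).sub continuous_const)
  have hg0 : g 0 = 0 := by simp only [g, hz0, hv, inv_one, one_smul, sub_self, hN.map_zero]
  have hg1 : g 1 = 2 := by
    simp only [g, hz1, hN.map_neg, hv, inv_one, one_smul]
    rw [show -v - v = (-2 : ℝ) • v by module, hN.smul_eq, hv]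
    norm_num
  obtain ⟨t, ht, hgt⟩ := intermediate_value_Ioo zero_le_one hg.continuousOn
    (show (1 : ℝ) ∈ Ioo (g 0) (g 1) by rw [hg0, hg1]; norm_num)
  refine ⟨(N (z t))⁻¹ • z t, ⟨?_, hgt⟩, ?_⟩
  · rw [hN.smul_eq, abs_of_pos (inv_pos.2 (hNz t)), inv_mul_cancel₀ (hNz t).ne']
  · rw [map_smul, smul_eq_mul]
    exact mul_pos (inv_pos.2 (hNz t)) (hwz t ht)

theorem sphereHasLongSegment_of_apexes_of_parallel (hN : IsNorm N) {p v : ℝ × ℝ}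
    (hv : N v = 1) {s : ℝ} (hs : s ≠ 0) (hp : p ∈ unitApexes N v)
    (hq : p + s • v ∈ unitApexes N v) :
    SphereHasLongSegment N := by
  obtain ⟨hp, hpv⟩ := hp
  obtain ⟨hq, hqv⟩ := hq
  rcases hs.lt_or_gt with hs | hs
  · refine hN.sphereHasLongSegment_of_chord hv hp hpv (s := s - 1) (t := 0) ?_ ?_ (by linarith)
    · rw [show p + (s - 1) • v = p + s • v - v by module, hqv]
    · rw [zero_smul, add_zero, hp]
  · refine hN.sphereHasLongSegment_of_chord hv hp hpv (s := -1) (t := s) ?_ hq.le (by linarith)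
    rw [neg_one_smul, ← sub_eq_add_neg, hpv]

theorem sphereHasLongSegment_of_apexes_of_wedge_lt (hN : IsNorm N) {p q v : ℝ × ℝ}
    (hv : N v = 1) (hp : p ∈ unitApexes N v) (hq : q ∈ unitApexes N v) (hp0 : 0 < wedge v p)
    (hpq : wedge v p < wedge v q) : SphereHasLongSegment N := by
  have hq0 : 0 < wedge v q := hp0.trans hpq
  set l := 1 - wedge v p / wedge v q
  have hl0 : 0 < l := sub_pos.2 ((div_lt_one hq0).2 hpq)
  have hl1 : l < 1 := sub_lt_self 1 (div_pos hp0 hq0)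
  have hball := hN.convexOn.convex_le 1
  -- `l` makes `wedge v` agree at `p` and at `l • v + (1 - l) • q`
  obtain ⟨b, hb⟩ : ∃ b : ℝ, l • v + (1 - l) • q = p + b • v := by
    refine exists_eq_add_smul_of_wedge_eq (hN.ne_zero_of_map_eq_one hv) ?_
    rw [map_add, map_smul, map_smul, wedge_self, smul_eq_mul, smul_eq_mul, mul_zero, zero_add,
      sub_sub_cancel, div_mul_cancel₀ _ hq0.ne']
  have hB : N (p + b • v) ≤ 1 := by
    rw [← hb]
    exact (hball ⟨trivial, hv.le⟩ ⟨trivial, hq.1.le⟩ hl0.le (by linarith) (by ring)).2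
  have hA : N (p + (b - 1 - l) • v) ≤ 1 := by
    have hline : l • -v + (1 - l) • (q - v) = p + (b - 1 - l) • v :=
      calc _ = l • v + (1 - l) • q - (1 + l) • v := by module
        _ = _ := by rw [hb]; module
    rw [← hline]
    exact (hball ⟨trivial, (hN.map_neg v ▸ hv).le⟩ ⟨trivial, hq.2.le⟩ hl0.le (by linarith)
      (by ring)).2
  exact hN.sphereHasLongSegment_of_chord hv hp.1 hp.2 hA hB (by linarith)

theorem sphereHasLongSegment_of_apexes (hN : IsNorm N) {p q v : ℝ × ℝ} (hv : N v = 1)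
    (hp : p ∈ unitApexes N v) (hq : q ∈ unitApexes N v) (hpq : p ≠ q) (hp0 : 0 < wedge v p)
    (hq0 : 0 < wedge v q) : SphereHasLongSegment N := by
  wlog hle : wedge v p ≤ wedge v q generalizing p q
  · exact this hq hp hpq.symm hq0 hp0 (le_of_not_ge hle)
  rcases hle.lt_or_eq with hlt | heq
  · exact hN.sphereHasLongSegment_of_apexes_of_wedge_lt hv hp hq hp0 hlt
  · obtain ⟨s, rfl⟩ := exists_eq_add_smul_of_wedge_eq (hN.ne_zero_of_map_eq_one hv) heq
    refine hN.sphereHasLongSegment_of_apexes_of_parallel hv ?_ hp hq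
    rintro rfl
    simp at hpq

theorem encard_unitApexes_eq_two (hN : IsNorm N) {v : ℝ × ℝ} (hv : N v = 1)
    (hno : ¬ SphereHasLongSegment N) : (unitApexes N v).encard = 2 := by
  obtain ⟨x, hx, hx0⟩ := hN.exists_mem_unitApexes_wedge_pos hv
  have hwedge_sub (y : ℝ × ℝ) : wedge v (v - y) = -wedge v y := by
    rw [map_sub, wedge_self, zero_sub]
  have hunique {y : ℝ × ℝ} (hy : y ∈ unitApexes N v) (hy0 : 0 < wedge v y) : y = x :=
    by_contra fun hyx => hno (hN.sphereHasLongSegment_of_apexes hv hy hx hyx hy0 hx0)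
  have hpair : unitApexes N v = {x, v - x} := by
    refine Subset.antisymm (fun y hy => ?_) (insert_subset hx (singleton_subset_iff.2
      (hN.sub_mem_unitApexes hx)))
    rcases lt_trichotomy (wedge v y) 0 with hneg | hzero | hpos
    · have hvy := hunique (hN.sub_mem_unitApexes hy) (by rw [hwedge_sub]; linarith)
      exact .inr (by rw [mem_singleton_iff, ← hvy, sub_sub_cancel])
    · exact absurd hzero (hN.wedge_ne_zero_of_mem_unitApexes hv hy)
    · exact .inl (hunique hy hpos)
  have hne : x ≠ v - x := fun h => by
    have := hwedge_sub x
    rw [← h] at this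
    linarith
  rw [hpair, encard_pair hne]

end IsNorm

/-- If `N` is not a URTC-norm, then its unit sphere contains a segment whose
endpoints are at distance `> 1`. -/
theorem long_segment_of_not_URTC (N : ℝ × ℝ → ℝ) (hN : IsNorm N)
    (h : ¬ IsURTC N) :
    ∃ c d : ℝ × ℝ, N c = 1 ∧ N d = 1 ∧ 1 < N (c - d) ∧
      segment ℝ c d ⊆ {x : ℝ × ℝ | N x = 1} := by
  by_contra hno
  refine h fun a b hab => ?_
  rw [← image_sub_unitApexes, sub_right_injective.encard_image]
  exact hN.encard_unitApexes_eq_two hab hno
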